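/- arXiv:1901.01150 — 2 statements merged into one kernel-verified Lean document; each statement's English description precedes it below -/
import Mathlib

section
/- Let j, k ≥ 1 with ℓ = n−j−k ≥ 1, and suppose f₀ : (0,∞) → [0,∞) is measurable with ∫₀ᵃ f₀(t) t^{n−j−1} dt < ∞ and ∫ₐ^∞ f₀(t) t^{k−1} dt < ∞ for some a > 0. Then for all 0 < α < β < ∞, ∫_α^β (I_{j,k} f₀)(s) ds < ∞, where (I_{j,k} f₀)(s) = (c₁/s^{n−k−2}) ∫₀ˢ (s²−r²)^{j/2−1} r^{ℓ−1} (∫_r^∞ f₀(t)(t²−r²)^{k/2−1} t dt) dr and c₁ = σ_{j−1}σ_{k−1}σ_{ℓ−1}/σ_{n−k−1}. -/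
open MeasureTheory Set ENNReal

/-- `σ_{m−1} = 2π^{m/2}/Γ(m/2)`. -/
noncomputable def sphereArea (m : ℕ) : ℝ :=
  2 * Real.pi ^ ((m : ℝ) / 2) / Real.Gamma ((m : ℝ) / 2)

/-- The mixed Radon transform of a radial profile `f₀`:
`(I_{j,k} f₀)(s) = (c₁/s^{n−k−2}) ∫₀ˢ (s²−r²)^{j/2−1} r^{ℓ−1}
  (∫_r^∞ f₀(t)(t²−r²)^{k/2−1} t dt) dr`. -/
noncomputable def Ijk (n j k ℓ : ℕ) (f₀ : ℝ → ℝ) (s : ℝ) : ℝ≥0∞ :=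
  ENNReal.ofReal
      ((sphereArea j * sphereArea k * sphereArea ℓ / sphereArea (n - k)) /
        s ^ ((n : ℝ) - k - 2)) *
    ∫⁻ r in Ioo (0:ℝ) s,
      ENNReal.ofReal ((s ^ 2 - r ^ 2) ^ ((j : ℝ) / 2 - 1) * r ^ ((ℓ : ℝ) - 1)) *
        ∫⁻ t in Ioi r, ENNReal.ofReal ((t ^ 2 - r ^ 2) ^ ((k : ℝ) / 2 - 1) * t * f₀ t)

/-!
Since `s ↦ c₁ / s ^ (n - k - 2)` is bounded on `[p, q]`, only the double integral matters.
Tonelli in `(s, r)` leaves the inner integral `∫_{max(p,r)}^q (s² - r²)^{j/2-1} ds`, bounded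
uniformly in `r < q`: in `(s² - r²)^γ = (s - r)^γ (s + r)^γ` the second factor is bounded since
`s + r ∈ [p, 2q]`, and the first is integrable since `γ > -1`. Tonelli in `(r, t)` then reduces
everything to `∫₀^∞ J(t) t f₀(t) dt` with `J(t) = ∫_{(0,q) ∩ (0,t)} r^{ℓ-1} (t² - r²)^{k/2-1} dr`.
The same factorisation gives `J(t) ≲ t^{ℓ+k-2}` for all `t`, while for `t ≥ 2q` the factor
`(t² - r²)^{k/2-1}` is comparable to `t^{k-2}`, so `J(t) ≲ t^{k-2}`: these match the weights
`t^{n-j-1}` near `0` and `t^{k-1}` near `∞` of the hypotheses.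
-/

theorem setLIntegral_Ioo_ofReal_eq_intervalIntegral {f : ℝ → ℝ} {a b : ℝ} (hab : a ≤ b)
    (hf : IntervalIntegrable f volume a b) (hf0 : ∀ x ∈ Ioo a b, 0 ≤ f x) :
    ∫⁻ x in Ioo a b, ENNReal.ofReal (f x) = ENNReal.ofReal (∫ x in a..b, f x) := by
  rw [intervalIntegral.integral_of_le hab, integral_Ioc_eq_integral_Ioo,
    ofReal_integral_eq_lintegral_ofReal]
  · exact (intervalIntegrable_iff_integrableOn_Ioo_of_le hab).mp hf
  · exact (ae_restrict_iff' measurableSet_Ioo).mpr (.of_forall hf0)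

theorem setLIntegral_Ioo_rpow_sub_const {a b γ : ℝ} (hab : a ≤ b) (hγ : -1 < γ) :
    ∫⁻ x in Ioo a b, ENNReal.ofReal ((x - a) ^ γ) =
      ENNReal.ofReal ((b - a) ^ (γ + 1) / (γ + 1)) := by
  have hint : IntervalIntegrable (fun x => (x - a) ^ γ) volume a b := by
    simpa using
      (intervalIntegral.intervalIntegrable_rpow' hγ (a := 0) (b := b - a)).comp_sub_right a
  rw [setLIntegral_Ioo_ofReal_eq_intervalIntegral hab hint
      fun x hx => Real.rpow_nonneg (sub_nonneg.mpr hx.1.le) _,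
    intervalIntegral.integral_comp_sub_right (fun x => x ^ γ), integral_rpow (.inl hγ), sub_self,
    Real.zero_rpow (by linarith), sub_zero]

theorem setLIntegral_Ioo_rpow_const_sub {a b γ : ℝ} (hab : a ≤ b) (hγ : -1 < γ) :
    ∫⁻ x in Ioo a b, ENNReal.ofReal ((b - x) ^ γ) =
      ENNReal.ofReal ((b - a) ^ (γ + 1) / (γ + 1)) := by
  have hint : IntervalIntegrable (fun x => (b - x) ^ γ) volume a b := by
    simpa using
      (intervalIntegral.intervalIntegrable_rpow' hγ (a := b - a) (b := 0)).comp_sub_left b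
  rw [setLIntegral_Ioo_ofReal_eq_intervalIntegral hab hint
      fun x hx => Real.rpow_nonneg (sub_nonneg.mpr hx.2.le) _,
    intervalIntegral.integral_comp_sub_left (fun x => x ^ γ), integral_rpow (.inl hγ), sub_self,
    Real.zero_rpow (by linarith), sub_zero]

theorem rpow_le_rpow_add_rpow_of_mem_Icc {a b x γ : ℝ} (ha : 0 < a) (hx : x ∈ Icc a b) :
    x ^ γ ≤ a ^ γ + b ^ γ := by
  have hx0 : 0 < x := ha.trans_le hx.1
  rcases le_total 0 γ with hγ | hγ
  · exact (Real.rpow_le_rpow hx0.le hx.2 hγ).trans (le_add_of_nonneg_left (by positivity))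
  · exact (Real.rpow_le_rpow_of_nonpos ha hx.1 hγ).trans
      (le_add_of_nonneg_right (Real.rpow_nonneg (hx0.le.trans hx.2) _))

theorem sq_sub_sq_rpow_le {r s a b γ : ℝ} (hr : 0 ≤ r) (hrs : r ≤ s) (ha : 0 < a)
    (h : s + r ∈ Icc a b) : (s ^ 2 - r ^ 2) ^ γ ≤ (a ^ γ + b ^ γ) * (s - r) ^ γ := by
  rw [sq_sub_sq, Real.mul_rpow (by linarith) (by linarith)]
  exact mul_le_mul_of_nonneg_right (rpow_le_rpow_add_rpow_of_mem_Icc ha h)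
    (Real.rpow_nonneg (by linarith) _)

theorem lintegral_lintegral_swap_lt {μ ν : Measure ℝ} [SFinite μ] [SFinite ν]
    {f : ℝ → ℝ → ℝ≥0∞} (hf : Measurable (Function.uncurry f)) {A B : Set ℝ}
    (hA : MeasurableSet A) (hB : MeasurableSet B) :
    ∫⁻ x in A, ∫⁻ y in B ∩ Iio x, f x y ∂ν ∂μ = ∫⁻ y in B, ∫⁻ x in A ∩ Ioi y, f x y ∂μ ∂ν := by
  classical
  set S : Set (ℝ × ℝ) := A ×ˢ B ∩ {z | z.2 < z.1}
  have hS : MeasurableSet S :=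
    (hA.prod hB).inter (measurableSet_lt measurable_snd measurable_fst)
  have hL : ∀ x, A.indicator (fun x => ∫⁻ y in B ∩ Iio x, f x y ∂ν) x =
      ∫⁻ y, S.indicator (Function.uncurry f) (x, y) ∂ν := by
    intro x
    by_cases hx : x ∈ A
    · rw [indicator_of_mem hx, ← lintegral_indicator (hB.inter measurableSet_Iio)]
      simp [S, Set.indicator_apply, hx]
    · simp [S, hx]
  have hR : ∀ y, B.indicator (fun y => ∫⁻ x in A ∩ Ioi y, f x y ∂μ) y =
      ∫⁻ x, S.indicator (Function.uncurry f) (x, y) ∂μ := by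
    intro y
    by_cases hy : y ∈ B
    · rw [indicator_of_mem hy, ← lintegral_indicator (hA.inter measurableSet_Ioi)]
      simp [S, Set.indicator_apply, hy]
    · simp [S, hy]
  rw [← lintegral_indicator hA, ← lintegral_indicator hB]
  simp_rw [hL, hR]
  exact lintegral_lintegral_swap (hf.indicator hS).aemeasurable

theorem measurable_setLIntegral_Ioi {μ : Measure ℝ} [SFinite μ] {g : ℝ → ℝ → ℝ≥0∞}
    (hg : Measurable (Function.uncurry g)) :
    Measurable fun r => ∫⁻ t in Ioi r, g r t ∂μ := by
  classical
  have h : ∀ r, ∫⁻ t in Ioi r, g r t ∂μ =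
      ∫⁻ t, {z : ℝ × ℝ | z.1 < z.2}.indicator (Function.uncurry g) (r, t) ∂μ := by
    intro r
    rw [← lintegral_indicator measurableSet_Ioi]
    simp [Set.indicator_apply]
  simp_rw [h]
  exact (hg.indicator (measurableSet_lt measurable_fst measurable_snd)).lintegral_prod_right'

theorem setLIntegral_sq_sub_sq_rpow_le {p q r γ : ℝ} (hp : 0 < p) (hr : 0 ≤ r) (hrq : r ≤ q)
    (hγ : -1 < γ) :
    ∫⁻ s in Ioo p q ∩ Ioi r, ENNReal.ofReal ((s ^ 2 - r ^ 2) ^ γ) ≤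
      ENNReal.ofReal ((p ^ γ + (2 * q) ^ γ) * (q ^ (γ + 1) / (γ + 1))) := by
  have hγ1 : 0 < γ + 1 := by linarith
  have hB : 0 ≤ p ^ γ + (2 * q) ^ γ :=
    add_nonneg (Real.rpow_nonneg hp.le _) (Real.rpow_nonneg (by linarith) _)
  calc ∫⁻ s in Ioo p q ∩ Ioi r, ENNReal.ofReal ((s ^ 2 - r ^ 2) ^ γ)
      ≤ ∫⁻ s in Ioo r q, ENNReal.ofReal ((p ^ γ + (2 * q) ^ γ) * (s - r) ^ γ) := by
        refine (setLIntegral_mono' (measurableSet_Ioo.inter measurableSet_Ioi)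
          fun s hs => ofReal_le_ofReal ?_).trans
          (lintegral_mono_set fun s hs => ⟨hs.2, hs.1.2⟩)
        exact sq_sub_sq_rpow_le hr hs.2.le hp ⟨by linarith [hs.1.1], by linarith [hs.1.2]⟩
    _ = ENNReal.ofReal (p ^ γ + (2 * q) ^ γ) *
          ENNReal.ofReal ((q - r) ^ (γ + 1) / (γ + 1)) := by
        rw [← setLIntegral_Ioo_rpow_sub_const hrq hγ, ← lintegral_const_mul' _ _ ofReal_ne_top]
        exact setLIntegral_congr_fun measurableSet_Ioo fun _ _ => ENNReal.ofReal_mul hB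
    _ ≤ _ := by
        rw [← ENNReal.ofReal_mul hB]
        gcongr
        linarith

theorem setLIntegral_rpow_mul_sq_sub_sq_rpow_le {t m γ : ℝ} (ht : 0 < t) (hm : 0 ≤ m)
    (hγ : -1 < γ) :
    ∫⁻ r in Ioo 0 t, ENNReal.ofReal (r ^ m * (t ^ 2 - r ^ 2) ^ γ) ≤
      ENNReal.ofReal ((1 + 2 ^ γ) / (γ + 1) * t ^ (m + 2 * γ + 1)) := by
  calc ∫⁻ r in Ioo 0 t, ENNReal.ofReal (r ^ m * (t ^ 2 - r ^ 2) ^ γ)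
      ≤ ∫⁻ r in Ioo 0 t, ENNReal.ofReal (t ^ m * (t ^ γ + (2 * t) ^ γ) * (t - r) ^ γ) := by
        refine setLIntegral_mono' measurableSet_Ioo fun r hr => ofReal_le_ofReal ?_
        rw [mul_assoc]
        exact mul_le_mul (Real.rpow_le_rpow hr.1.le hr.2.le hm)
          (sq_sub_sq_rpow_le hr.1.le hr.2.le ht ⟨by linarith [hr.1], by linarith [hr.2]⟩)
          (Real.rpow_nonneg (by nlinarith [hr.1, hr.2]) _) (by positivity)
    _ = ENNReal.ofReal (t ^ m * (t ^ γ + (2 * t) ^ γ)) *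
          ENNReal.ofReal (t ^ (γ + 1) / (γ + 1)) := by
        rw [← sub_zero t, ← setLIntegral_Ioo_rpow_const_sub ht.le hγ, sub_zero,
          ← lintegral_const_mul' _ _ ofReal_ne_top]
        exact setLIntegral_congr_fun measurableSet_Ioo fun _ _ => ENNReal.ofReal_mul (by positivity)
    _ = _ := by
        rw [← ENNReal.ofReal_mul (by positivity)]
        congr 1
        rw [Real.mul_rpow zero_le_two ht.le, Real.rpow_add ht, Real.rpow_add ht,
          Real.rpow_add ht, two_mul, Real.rpow_add ht, Real.rpow_one]
        field_simp

theorem setLIntegral_rpow_mul_sq_sub_sq_rpow_le_of_two_mul_le {b t m γ : ℝ} (hb : 0 < b)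
    (hbt : 2 * b ≤ t) (hm : -1 < m) :
    ∫⁻ r in Ioo 0 b, ENNReal.ofReal (r ^ m * (t ^ 2 - r ^ 2) ^ γ) ≤
      ENNReal.ofReal (b ^ (m + 1) / (m + 1) * (4⁻¹ ^ γ + 1) * t ^ (2 * γ)) := by
  have ht : 0 < t := by linarith
  have ht2 : (t ^ 2) ^ γ = t ^ (2 * γ) := by
    rw [Real.rpow_mul ht.le, Real.rpow_two]
  calc ∫⁻ r in Ioo 0 b, ENNReal.ofReal (r ^ m * (t ^ 2 - r ^ 2) ^ γ)
      ≤ ∫⁻ r in Ioo 0 b, ENNReal.ofReal (r ^ m * ((t ^ 2 / 4) ^ γ + (t ^ 2) ^ γ)) := by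
        refine setLIntegral_mono' measurableSet_Ioo fun r hr => ofReal_le_ofReal ?_
        refine mul_le_mul_of_nonneg_left (rpow_le_rpow_add_rpow_of_mem_Icc (by positivity)
          ⟨by nlinarith [hr.1, hr.2], by nlinarith [hr.1]⟩) (Real.rpow_nonneg hr.1.le _)
    _ = ENNReal.ofReal (b ^ (m + 1) / (m + 1)) *
          ENNReal.ofReal ((t ^ 2 / 4) ^ γ + (t ^ 2) ^ γ) := by
        rw [← sub_zero b, ← setLIntegral_Ioo_rpow_sub_const hb.le hm, sub_zero,
          ← lintegral_mul_const' _ _ ofReal_ne_top]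
        refine setLIntegral_congr_fun measurableSet_Ioo fun r hr => ?_
        rw [sub_zero]
        exact ENNReal.ofReal_mul (Real.rpow_nonneg hr.1.le _)
    _ = _ := by
        rw [← ENNReal.ofReal_mul (div_nonneg (by positivity) (by linarith)),
          div_eq_mul_inv (t ^ 2), Real.mul_rpow (by positivity) (by norm_num), ht2]
        congr 1
        ring

theorem setLIntegral_lintegral_sq_sub_sq_rpow_mul_le {p q γ m : ℝ} (hp : 0 < p) (hγ : -1 < γ)
    {G : ℝ → ℝ≥0∞} (hG : Measurable G) :
    ∫⁻ s in Ioo p q, ∫⁻ r in Ioo 0 s, ENNReal.ofReal ((s ^ 2 - r ^ 2) ^ γ * r ^ m) * G r ≤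
      ENNReal.ofReal ((p ^ γ + (2 * q) ^ γ) * (q ^ (γ + 1) / (γ + 1))) *
        ∫⁻ r in Ioo 0 q, ENNReal.ofReal (r ^ m) * G r := by
  calc _ = ∫⁻ s in Ioo p q, ∫⁻ r in Ioo 0 q ∩ Iio s,
          ENNReal.ofReal ((s ^ 2 - r ^ 2) ^ γ * r ^ m) * G r :=
        setLIntegral_congr_fun measurableSet_Ioo fun s hs => by
          rw [Ioo_inter_Iio, min_eq_right hs.2.le]
    _ = ∫⁻ r in Ioo 0 q, ∫⁻ s in Ioo p q ∩ Ioi r,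
          ENNReal.ofReal ((s ^ 2 - r ^ 2) ^ γ * r ^ m) * G r :=
        lintegral_lintegral_swap_lt (by fun_prop) measurableSet_Ioo measurableSet_Ioo
    _ = ∫⁻ r in Ioo 0 q, (∫⁻ s in Ioo p q ∩ Ioi r, ENNReal.ofReal ((s ^ 2 - r ^ 2) ^ γ)) *
          (ENNReal.ofReal (r ^ m) * G r) := by
        refine setLIntegral_congr_fun measurableSet_Ioo fun r hr => ?_
        rw [← lintegral_mul_const _ (by fun_prop)]
        refine setLIntegral_congr_fun (measurableSet_Ioo.inter measurableSet_Ioi) fun s hs => ?_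
        have hK : 0 ≤ (s ^ 2 - r ^ 2) ^ γ :=
          Real.rpow_nonneg (by nlinarith [hr.1, mem_Ioi.mp hs.2]) _
        rw [ENNReal.ofReal_mul hK, mul_assoc]
    _ ≤ ∫⁻ r in Ioo 0 q, ENNReal.ofReal ((p ^ γ + (2 * q) ^ γ) * (q ^ (γ + 1) / (γ + 1))) *
          (ENNReal.ofReal (r ^ m) * G r) :=
        setLIntegral_mono' measurableSet_Ioo fun r hr =>
          mul_le_mul_left (setLIntegral_sq_sub_sq_rpow_le hp hr.1.le hr.2.le hγ) _
    _ = _ := lintegral_const_mul' _ _ ofReal_ne_top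

theorem setLIntegral_Ioo_mul_lintegral_Ioi_eq {q m γ : ℝ} {f : ℝ → ℝ} (hf : Measurable f) :
    ∫⁻ r in Ioo 0 q, ENNReal.ofReal (r ^ m) *
        ∫⁻ t in Ioi r, ENNReal.ofReal ((t ^ 2 - r ^ 2) ^ γ * t * f t) =
      ∫⁻ t in Ioi 0, (∫⁻ r in Ioo 0 q ∩ Iio t, ENNReal.ofReal (r ^ m * (t ^ 2 - r ^ 2) ^ γ)) *
        ENNReal.ofReal (t * f t) := by
  calc _ = ∫⁻ r in Ioo 0 q, ∫⁻ t in Ioi 0 ∩ Ioi r,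
          ENNReal.ofReal (r ^ m * (t ^ 2 - r ^ 2) ^ γ) * ENNReal.ofReal (t * f t) := by
        refine setLIntegral_congr_fun measurableSet_Ioo fun r hr => ?_
        rw [Ioi_inter_Ioi, max_eq_right hr.1.le, ← lintegral_const_mul' _ _ ofReal_ne_top]
        refine setLIntegral_congr_fun measurableSet_Ioi fun t ht => ?_
        have hK : 0 ≤ (t ^ 2 - r ^ 2) ^ γ :=
          Real.rpow_nonneg (by nlinarith [hr.1, (mem_Ioi.mp ht)]) _
        rw [← ENNReal.ofReal_mul (Real.rpow_nonneg hr.1.le _),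
          ← ENNReal.ofReal_mul (mul_nonneg (Real.rpow_nonneg hr.1.le _) hK)]
        congr 1
        ring
    _ = ∫⁻ t in Ioi 0, ∫⁻ r in Ioo 0 q ∩ Iio t,
          ENNReal.ofReal (r ^ m * (t ^ 2 - r ^ 2) ^ γ) * ENNReal.ofReal (t * f t) :=
        (lintegral_lintegral_swap_lt (by fun_prop) measurableSet_Ioi measurableSet_Ioo).symm
    _ = _ := setLIntegral_congr_fun measurableSet_Ioi fun t _ =>
        lintegral_mul_const _ (by fun_prop)

theorem setLIntegral_Ioi_zero_lt_top_of_le {F g₀ g₁ : ℝ → ℝ≥0∞} {C₀ C₁ : ℝ≥0∞} {a : ℝ}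
    (ha : 0 < a) (hF₀ : ∀ t > 0, F t ≤ C₀ * g₀ t) (hF₁ : ∀ t > 0, F t ≤ C₁ * g₁ t)
    (hC₀ : C₀ ≠ ⊤) (hC₁ : C₁ ≠ ⊤)
    (hg₀ : ∫⁻ t in Ioo 0 a, g₀ t < ⊤) (hg₁ : ∫⁻ t in Ioi a, g₁ t < ⊤) :
    ∫⁻ t in Ioi 0, F t < ⊤ := by
  rw [← Ioo_union_Ici_eq_Ioi ha]
  refine (lintegral_union_le _ _ _).trans_lt (add_lt_top.mpr ⟨?_, ?_⟩)
  · calc ∫⁻ t in Ioo 0 a, F t ≤ ∫⁻ t in Ioo 0 a, C₀ * g₀ t :=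
          setLIntegral_mono' measurableSet_Ioo fun t ht => hF₀ t ht.1
      _ = C₀ * ∫⁻ t in Ioo 0 a, g₀ t := lintegral_const_mul' _ _ hC₀
      _ < ⊤ := mul_lt_top hC₀.lt_top hg₀
  · rw [← restrict_Ioi_eq_restrict_Ici]
    calc ∫⁻ t in Ioi a, F t ≤ ∫⁻ t in Ioi a, C₁ * g₁ t :=
          setLIntegral_mono' measurableSet_Ioi fun t ht => hF₁ t (ha.trans ht)
      _ = C₁ * ∫⁻ t in Ioi a, g₁ t := lintegral_const_mul' _ _ hC₁
      _ < ⊤ := mul_lt_top hC₁.lt_top hg₁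

theorem setLIntegral_Ioo_ofReal_mul_lt_top {φ : ℝ → ℝ} {D : ℝ → ℝ≥0∞} {p q : ℝ}
    (hφ : ContinuousOn φ (Icc p q)) (hD : ∫⁻ s in Ioo p q, D s < ⊤) :
    ∫⁻ s in Ioo p q, ENNReal.ofReal (φ s) * D s < ⊤ := by
  obtain ⟨C, hC⟩ := isCompact_Icc.exists_bound_of_continuousOn hφ
  calc ∫⁻ s in Ioo p q, ENNReal.ofReal (φ s) * D s
      ≤ ∫⁻ s in Ioo p q, ENNReal.ofReal C * D s :=
        setLIntegral_mono' measurableSet_Ioo fun s hs => mul_le_mul_left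
          (ofReal_le_ofReal ((Real.le_norm_self _).trans (hC s (Ioo_subset_Icc_self hs)))) _
    _ = ENNReal.ofReal C * ∫⁻ s in Ioo p q, D s := lintegral_const_mul' _ _ ofReal_ne_top
    _ < ⊤ := mul_lt_top ofReal_lt_top hD

theorem setLIntegral_Ioi_kernel_mul_lt_top {f : ℝ → ℝ} {a q m γ : ℝ} (ha : 0 < a)
    (hq : 0 < q) (hm : 0 ≤ m) (hγ : -1 < γ)
    (h₀ : ∫⁻ t in Ioo 0 a, ENNReal.ofReal (f t * t ^ (m + 2 * γ + 2)) < ⊤)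
    (h₁ : ∫⁻ t in Ioi a, ENNReal.ofReal (f t * t ^ (2 * γ + 1)) < ⊤) :
    ∫⁻ t in Ioi 0, (∫⁻ r in Ioo 0 q ∩ Iio t, ENNReal.ofReal (r ^ m * (t ^ 2 - r ^ 2) ^ γ)) *
        ENNReal.ofReal (t * f t) < ⊤ := by
  set C₀ : ℝ := (1 + 2 ^ γ) / (γ + 1)
  set C₁ : ℝ := C₀ * (2 * q) ^ (m + 1) + q ^ (m + 1) / (m + 1) * (4⁻¹ ^ γ + 1)
  have hC₀ : 0 ≤ C₀ := div_nonneg (by positivity) (by linarith)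
  have hC₁ : 0 ≤ C₁ := by
    have : 0 ≤ q ^ (m + 1) / (m + 1) := div_nonneg (by positivity) (by linarith)
    positivity
  have hJ₀ : ∀ t > 0, ∫⁻ r in Ioo 0 q ∩ Iio t, ENNReal.ofReal (r ^ m * (t ^ 2 - r ^ 2) ^ γ) ≤
      ENNReal.ofReal (C₀ * t ^ (m + 2 * γ + 1)) := by
    intro t ht
    have hsub : Ioo 0 q ∩ Iio t ⊆ Ioo 0 t := fun r hr => ⟨hr.1.1, hr.2⟩
    exact (lintegral_mono_set hsub).trans (setLIntegral_rpow_mul_sq_sub_sq_rpow_le ht hm hγ)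
  have hJ₁ : ∀ t > 0, ∫⁻ r in Ioo 0 q ∩ Iio t, ENNReal.ofReal (r ^ m * (t ^ 2 - r ^ 2) ^ γ) ≤
      ENNReal.ofReal (C₁ * t ^ (2 * γ)) := by
    intro t ht
    rcases le_or_gt t (2 * q) with htq | htq
    · refine (hJ₀ t ht).trans (ofReal_le_ofReal ?_)
      calc C₀ * t ^ (m + 2 * γ + 1) = C₀ * t ^ (m + 1) * t ^ (2 * γ) := by
            rw [mul_assoc, ← Real.rpow_add ht, add_right_comm]
        _ ≤ C₀ * (2 * q) ^ (m + 1) * t ^ (2 * γ) := by gcongr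
        _ ≤ C₁ * t ^ (2 * γ) := by
            gcongr
            exact le_add_of_nonneg_right (by positivity)
    · refine (lintegral_mono_set inter_subset_left).trans
        ((setLIntegral_rpow_mul_sq_sub_sq_rpow_le_of_two_mul_le hq htq.le (by linarith)).trans
          (ofReal_le_ofReal ?_))
      gcongr
      exact le_add_of_nonneg_left (by positivity)
  have hmul : ∀ {C e t : ℝ}, 0 ≤ C → 0 < t →
      ENNReal.ofReal (C * t ^ e) * ENNReal.ofReal (t * f t) =
        ENNReal.ofReal C * ENNReal.ofReal (f t * t ^ (e + 1)) := by
    intro C e t hC ht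
    rw [← ENNReal.ofReal_mul (by positivity), ← ENNReal.ofReal_mul hC, Real.rpow_add_one ht.ne']
    congr 1
    ring
  refine setLIntegral_Ioi_zero_lt_top_of_le (C₀ := ENNReal.ofReal C₀) (C₁ := ENNReal.ofReal C₁)
    ha (fun t ht => ?_) (fun t ht => ?_) ofReal_ne_top ofReal_ne_top h₀ h₁
  · calc _ ≤ ENNReal.ofReal (C₀ * t ^ (m + 2 * γ + 1)) * ENNReal.ofReal (t * f t) :=
          mul_le_mul_left (hJ₀ t ht) _
      _ = _ := by rw [hmul hC₀ ht, add_assoc _ 1, one_add_one_eq_two]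
  · calc _ ≤ ENNReal.ofReal (C₁ * t ^ (2 * γ)) * ENNReal.ofReal (t * f t) :=
          mul_le_mul_left (hJ₁ t ht) _
      _ = _ := hmul hC₁ ht

theorem mixed_radon_radial_loc_integrable_general (n j k ℓ : ℕ) (hj : 1 ≤ j) (hk : 1 ≤ k)
    (hℓ : 1 ≤ ℓ) (hn : n = j + k + ℓ)
    (f₀ : ℝ → ℝ) (hmeas : Measurable f₀)
    (a : ℝ) (ha : 0 < a)
    (h1 : ∫⁻ t in Ioo (0:ℝ) a, ENNReal.ofReal (f₀ t * t ^ ((n : ℝ) - j - 1)) < ⊤)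
    (h2 : ∫⁻ t in Ioi a, ENNReal.ofReal (f₀ t * t ^ ((k : ℝ) - 1)) < ⊤) :
    ∀ p q : ℝ, 0 < p → p < q →
      ∫⁻ s in Ioo p q, Ijk n j k ℓ f₀ s < ⊤ := by
  intro p q hp hpq
  have hγj : (-1 : ℝ) < j / 2 - 1 := by
    have : (1 : ℝ) ≤ j := by exact_mod_cast hj
    linarith
  have hγk : (-1 : ℝ) < k / 2 - 1 := by
    have : (1 : ℝ) ≤ k := by exact_mod_cast hk
    linarith
  have hm : (0 : ℝ) ≤ ℓ - 1 := by
    have : (1 : ℝ) ≤ ℓ := by exact_mod_cast hℓ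
    linarith
  refine setLIntegral_Ioo_ofReal_mul_lt_top
    (by fun_prop (disch := intro s hs; have := hp.trans_le hs.1; positivity)) ?_
  refine (setLIntegral_lintegral_sq_sub_sq_rpow_mul_le hp hγj
    (measurable_setLIntegral_Ioi (by fun_prop))).trans_lt (mul_lt_top ofReal_lt_top ?_)
  rw [setLIntegral_Ioo_mul_lintegral_Ioi_eq hmeas]
  refine setLIntegral_Ioi_kernel_mul_lt_top ha (hp.trans hpq) hm hγk ?_ ?_
  · convert h1 using 6
    rw [hn]
    push_cast
    ring
  · convert h2 using 6
    ring

/-- Local integrability of the mixed Radon transform of a radial profile: if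
`∫₀ᵃ f₀(t) t^{n−j−1} dt < ∞` and `∫ₐ^∞ f₀(t) t^{k−1} dt < ∞`, then
`∫_α^β (I_{j,k} f₀)(s) ds < ∞` for all `0 < α < β < ∞`. -/
theorem mixed_radon_radial_loc_integrable (n j k ℓ : ℕ) (hj : 1 ≤ j) (hk : 1 ≤ k)
    (hℓ : 1 ≤ ℓ) (hn : n = j + k + ℓ)
    (f₀ : ℝ → ℝ) (hpos : ∀ t, 0 ≤ f₀ t) (hmeas : Measurable f₀)
    (a : ℝ) (ha : 0 < a)
    (h1 : ∫⁻ t in Ioo (0:ℝ) a, ENNReal.ofReal (f₀ t * t ^ ((n : ℝ) - j - 1)) < ⊤)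
    (h2 : ∫⁻ t in Ioi a, ENNReal.ofReal (f₀ t * t ^ ((k : ℝ) - 1)) < ⊤) :
    ∀ p q : ℝ, 0 < p → p < q →
      ∫⁻ s in Ioo p q, Ijk n j k ℓ f₀ s < ⊤ :=
  mixed_radon_radial_loc_integrable_general n j k ℓ hj hk hℓ hn f₀ hmeas a ha h1 h2
end

section
/- For p ≥ (n−j)/k with j, k ≥ 1 and j+k < n, the function f(τ) = (2+|τ|)^{(j−n)/p} (log(2+|τ|))^{−1} on the affine Grassmannian of j-planes in ℝⁿ belongs to L^p but fails the condition ∫_{|τ|>a} |f(τ)| |τ|^{k+j−n} dτ < ∞ for every a > 0 (i.e. the integral diverges). -/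
/-!
Both conditions only involve `‖τ.2‖` and `μ` is a probability measure, so they are conditions on
radial functions on `ℝᵐ`, which polar coordinates turn into one-dimensional integrals. Since
`p ≥ m/k > 1`, `|f|^p r^{m-1} = r^{m-1} (2+r)^{-m} log(2+r)^{-p} ≤ (2+r)⁻¹ log(2+r)^{-p}`, whose
antiderivative `log(2+r)^{1-p}/(1-p)` has a limit at infinity. On the other hand `m/p ≤ k` gives
`|f| r^{k-m} r^{m-1} ≥ 3^{1-k} (2+r)⁻¹ log(2+r)⁻¹` for `r ≥ 1`, and the antiderivative
`log log (2+r)` of the right-hand side is unbounded.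
-/

open MeasureTheory Set ENNReal Filter Module Topology

theorem integrableOn_Ioi_comp_const_add {F : Type*} [NormedAddCommGroup F] {f : ℝ → F}
    (c a : ℝ) : IntegrableOn (fun x => f (c + x)) (Ioi a) ↔ IntegrableOn f (Ioi (c + a)) := by
  have h := (measurePreserving_add_left volume c).integrableOn_comp_preimage
    (measurableEmbedding_addLeft c) (f := f) (s := Ioi (c + a))
  rwa [preimage_const_add_Ioi, add_sub_cancel_left] at h

theorem integrableOn_Ioi_inv_mul_log_rpow_neg {p a : ℝ} (hp : 1 < p) (ha : 1 < a) :
    IntegrableOn (fun x => x⁻¹ * Real.log x ^ (-p)) (Ioi a) := by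
  have hderiv : ∀ x ∈ Ici a, HasDerivAt (fun x => Real.log x ^ (1 - p) / (1 - p))
      (x⁻¹ * Real.log x ^ (-p)) x := by
    intro x hx
    have hx1 : 1 < x := ha.trans_le hx
    refine (((Real.hasDerivAt_log (by positivity)).rpow_const (p := 1 - p)
      (Or.inl (Real.log_pos hx1).ne')).div_const (1 - p)).congr_deriv ?_
    rw [show 1 - p - 1 = -p by ring]
    field_simp [show 1 - p ≠ 0 by linarith]
  refine integrableOn_Ioi_deriv_of_nonneg' (l := 0) hderiv (fun x hx => ?_) ?_
  · have hx1 : 1 < x := ha.trans hx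
    have := Real.log_pos hx1
    have : (0 : ℝ) < x := by linarith
    positivity
  · have h : Tendsto (fun t : ℝ => t ^ (1 - p)) atTop (𝓝 0) := by
      simpa using tendsto_rpow_neg_atTop (by linarith : 0 < p - 1)
    simpa using (h.comp Real.tendsto_log_atTop).div_const (1 - p)

theorem not_integrableOn_Ioi_inv_mul_log_inv (a : ℝ) :
    ¬ IntegrableOn (fun x => x⁻¹ * (Real.log x)⁻¹) (Ioi a) := by
  have hderiv : ∀ᶠ x in atTop,
      HasDerivAt (fun x => Real.log (Real.log x)) (x⁻¹ * (Real.log x)⁻¹) x := by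
    filter_upwards [eventually_gt_atTop 1] with x hx
    convert (Real.hasDerivAt_log (by positivity : x ≠ 0)).log (Real.log_pos hx).ne' using 1
    ring
  exact not_integrableOn_of_tendsto_norm_atTop_of_deriv_isBigO_filter atTop (Ioi_mem_atTop a)
    (hderiv.mono fun x hx => hx.differentiableAt)
    (tendsto_norm_atTop_atTop.comp (Real.tendsto_log_atTop.comp Real.tendsto_log_atTop))
    (EventuallyEq.isBigO (hderiv.mono fun x hx => hx.deriv))

theorem pow_pred_mul_rpow_neg_le_inv {y z : ℝ} {d : ℕ} (hd : 1 ≤ d) (hy : 0 ≤ y) (hyz : y ≤ z)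
    (hz : 0 < z) : y ^ (d - 1) * z ^ (-(d : ℝ)) ≤ z⁻¹ := by
  calc y ^ (d - 1) * z ^ (-(d : ℝ)) ≤ z ^ (d - 1) * z ^ (-(d : ℝ)) := by gcongr
    _ = z⁻¹ := by
      rw [← Real.rpow_natCast, ← Real.rpow_add hz, Nat.cast_sub hd, Nat.cast_one,
        show (d : ℝ) - 1 + -d = -1 by ring, Real.rpow_neg_one]

theorem inv_two_add_le_rpow_mul_rpow_neg {y s k : ℝ} (hy : 1 ≤ y) (hk : 1 ≤ k) (hs : s ≤ k) :
    (2 + y)⁻¹ ≤ 3 ^ (k - 1) * (y ^ (k - 1) * (2 + y) ^ (-s)) := by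
  have h2y : 0 < 2 + y := by linarith
  calc (2 + y)⁻¹ = (2 + y) ^ (k - 1) * (2 + y) ^ (-k) := by
        rw [← Real.rpow_add h2y, show k - 1 + -k = -1 by ring, Real.rpow_neg_one]
    _ ≤ (3 * y) ^ (k - 1) * (2 + y) ^ (-s) := by
        gcongr
        · linarith
        · linarith
    _ = 3 ^ (k - 1) * (y ^ (k - 1) * (2 + y) ^ (-s)) := by
        rw [Real.mul_rpow (by norm_num) (by linarith)]; ring

-- The paper's `f(τ)` is `logDampedPower ((n - j) / p) |τ|`.
noncomputable def logDampedPower (s r : ℝ) : ℝ := (2 + r) ^ (-s) * (Real.log (2 + r))⁻¹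

theorem continuous_logDampedPower_norm {E : Type*} [SeminormedAddCommGroup E] (s : ℝ) :
    Continuous fun x : E => logDampedPower s ‖x‖ := by
  have h2 : ∀ x : E, 1 < 2 + ‖x‖ := fun x => by linarith [norm_nonneg x]
  have hc : Continuous fun x : E => 2 + ‖x‖ := by fun_prop
  exact (hc.rpow_const fun x => Or.inl (by linarith [h2 x])).mul
    ((hc.log fun x => by linarith [h2 x]).inv₀ fun x => (Real.log_pos (h2 x)).ne')

section Radial

variable {E : Type*} [NormedAddCommGroup E] [NormedSpace ℝ E] [MeasurableSpace E] [BorelSpace E]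
  [FiniteDimensional ℝ E] [Nontrivial E] (μ : Measure E) [μ.IsAddHaarMeasure]

theorem memLp_logDampedPower_norm {p : ℝ} (hp : 1 < p) :
    MemLp (fun x : E => logDampedPower (finrank ℝ E / p) ‖x‖) (ENNReal.ofReal p) μ := by
  set d := finrank ℝ E
  have hd : 1 ≤ d := finrank_pos
  have hp0 : 0 < p := by linarith
  rw [← integrable_norm_rpow_iff (continuous_logDampedPower_norm _).aestronglyMeasurable
    (by simpa using hp0) ENNReal.ofReal_ne_top, ENNReal.toReal_ofReal hp0.le]
  have hpow : ∀ r : ℝ, 0 ≤ r →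
      ‖logDampedPower (d / p) r‖ ^ p = (2 + r) ^ (-(d : ℝ)) * Real.log (2 + r) ^ (-p) := by
    intro r hr
    have h2 : 0 < 2 + r := by linarith
    have hL : 0 < Real.log (2 + r) := Real.log_pos (by linarith)
    rw [logDampedPower, Real.norm_of_nonneg (by positivity), Real.mul_rpow (by positivity)
      (by positivity), ← Real.rpow_mul h2.le, Real.inv_rpow hL.le, ← Real.rpow_neg hL.le,
      neg_mul, div_mul_cancel₀ _ hp0.ne']
  have hdom : IntegrableOn (fun y => (2 + y)⁻¹ * Real.log (2 + y) ^ (-p)) (Ioi 0) :=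
    (integrableOn_Ioi_comp_const_add 2 0).2
      (integrableOn_Ioi_inv_mul_log_rpow_neg hp (by norm_num))
  have hrad : IntegrableOn
      (fun y : ℝ => y ^ (d - 1) • ((2 + y) ^ (-(d : ℝ)) * Real.log (2 + y) ^ (-p))) (Ioi 0) := by
    refine hdom.mono' (by fun_prop) ?_
    filter_upwards [ae_restrict_mem measurableSet_Ioi] with y (hy : 0 < y)
    have hL : 0 < Real.log (2 + y) := Real.log_pos (by linarith)
    rw [smul_eq_mul, Real.norm_of_nonneg (by positivity), ← mul_assoc]
    gcongr
    exact pow_pred_mul_rpow_neg_le_inv hd hy.le (by linarith) (by linarith)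
  exact ((integrable_fun_norm_addHaar μ).2 hrad).congr
    (ae_of_all _ fun x => (hpow _ (norm_nonneg x)).symm)

theorem setLIntegral_logDampedPower_mul_norm_rpow_eq_top {s k : ℝ} (hk : 1 ≤ k) (hs : s ≤ k)
    (a : ℝ) :
    ∫⁻ x in {x : E | a < ‖x‖},
      ENNReal.ofReal (logDampedPower s ‖x‖ * ‖x‖ ^ (k - finrank ℝ E)) ∂μ = ⊤ := by
  set d := finrank ℝ E
  have hd : 1 ≤ d := finrank_pos
  set G : ℝ → ℝ := fun r => logDampedPower s r * r ^ (k - d)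
  have hG : Measurable G := by simp only [G, logDampedPower]; fun_prop
  have hG0 : ∀ r, 0 ≤ r → 0 ≤ G r := fun r hr => by
    have hL : 0 < Real.log (2 + r) := Real.log_pos (by linarith)
    simp only [G, logDampedPower]; positivity
  by_contra hfin
  have hint : Integrable ({x : E | a < ‖x‖}.indicator fun x => G ‖x‖) μ :=
    (integrable_indicator_iff (measurableSet_lt measurable_const measurable_norm)).2
      ((lintegral_ofReal_ne_top_iff_integrable (hG.comp measurable_norm).aestronglyMeasurable
        (ae_of_all _ fun x => hG0 _ (norm_nonneg x))).1 hfin)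
  have hrad : IntegrableOn (fun y => y ^ (d - 1) • (Ioi a).indicator G y) (Ioi 0) :=
    (integrable_fun_norm_addHaar μ).1 hint
  set b := max a 1
  have hb : IntegrableOn (fun y => (2 + y)⁻¹ * (Real.log (2 + y))⁻¹) (Ioi b) := by
    refine ((hrad.mono_set (Ioi_subset_Ioi (by positivity))).const_mul (3 ^ (k - 1))).mono'
      (by fun_prop) ?_
    filter_upwards [ae_restrict_mem measurableSet_Ioi] with y (hy : b < y)
    have hy1 : 1 < y := (le_max_right a 1).trans_lt hy
    have hL : 0 < Real.log (2 + y) := Real.log_pos (by linarith)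
    have hpow : y ^ (d - 1) * y ^ (k - d) = y ^ (k - 1) := by
      rw [← Real.rpow_natCast, ← Real.rpow_add (by linarith), Nat.cast_sub hd, Nat.cast_one]
      ring_nf
    rw [indicator_of_mem (show y ∈ Ioi a from (le_max_left a 1).trans_lt hy), smul_eq_mul,
      Real.norm_of_nonneg (by positivity)]
    calc (2 + y)⁻¹ * (Real.log (2 + y))⁻¹
        ≤ 3 ^ (k - 1) * (y ^ (k - 1) * (2 + y) ^ (-s)) * (Real.log (2 + y))⁻¹ := by
          gcongr; exact inv_two_add_le_rpow_mul_rpow_neg hy1.le hk hs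
      _ = 3 ^ (k - 1) * (y ^ (d - 1) * G y) := by
          simp only [G, logDampedPower, ← hpow]; ring
  exact not_integrableOn_Ioi_inv_mul_log_inv (2 + b) ((integrableOn_Ioi_comp_const_add 2 b).1 hb)

end Radial

theorem lp_counterexample_general (j k m : ℕ) (hk : 1 ≤ k) (hkm : k < m)
    [MeasurableSpace (Matrix.orthogonalGroup (Fin (j + m)) ℝ)]
    (μ : Measure (Matrix.orthogonalGroup (Fin (j + m)) ℝ))
    [IsProbabilityMeasure μ]
    (p : ℝ) (hp : (m : ℝ) / k ≤ p) :
    MemLp (fun τ : Matrix.orthogonalGroup (Fin (j + m)) ℝ × EuclideanSpace ℝ (Fin m) =>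
        (2 + ‖τ.2‖) ^ (((j : ℝ) - ((j + m : ℕ) : ℝ)) / p) * (Real.log (2 + ‖τ.2‖))⁻¹)
      (ENNReal.ofReal p) (μ.prod volume) ∧
    ∀ a > (0:ℝ),
      ∫⁻ τ in {τ : Matrix.orthogonalGroup (Fin (j + m)) ℝ ×
          EuclideanSpace ℝ (Fin m) | a < ‖τ.2‖},
        ENNReal.ofReal
          ((2 + ‖τ.2‖) ^ (((j : ℝ) - ((j + m : ℕ) : ℝ)) / p) *
            (Real.log (2 + ‖τ.2‖))⁻¹ * ‖τ.2‖ ^ ((k : ℝ) - m)) ∂(μ.prod volume) = ⊤ := by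
  have hk0 : (0 : ℝ) < k := by exact_mod_cast hk
  have hp1 : 1 < p := ((one_lt_div hk0).2 (by exact_mod_cast hkm)).trans_le hp
  have hmp : (m : ℝ) / p ≤ k := by
    rw [div_le_iff₀ hk0] at hp
    rw [div_le_iff₀ (by linarith)]
    linarith
  have hexp : ((j : ℝ) - ((j + m : ℕ) : ℝ)) / p = -((m : ℝ) / p) := by push_cast; ring
  have : Nonempty (Fin m) := ⟨⟨0, by omega⟩⟩
  have hdim : finrank ℝ (EuclideanSpace ℝ (Fin m)) = m := finrank_euclideanSpace_fin
  simp only [hexp]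
  refine ⟨?_, fun a _ => ?_⟩
  · have h := memLp_logDampedPower_norm (volume : Measure (EuclideanSpace ℝ (Fin m))) hp1
    rw [hdim] at h
    exact h.comp_measurePreserving measurePreserving_snd
  · have h := setLIntegral_logDampedPower_mul_norm_rpow_eq_top
      (volume : Measure (EuclideanSpace ℝ (Fin m))) (by exact_mod_cast hk) hmp a
    rw [hdim, ← (measurePreserving_snd (μ := μ)).setLIntegral_comp_preimage
      (measurableSet_lt measurable_const measurable_norm) (by unfold logDampedPower; fun_prop)] at h
    exact h

/-- Sharpness of the `L^p` existence condition: for `p ≥ (n−j)/k = m/k` the radial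
function `f(τ) = (2+|τ|)^{(j−n)/p} (log(2+|τ|))^{−1}` on the affine Grassmannian of
`j`-planes in `ℝⁿ` (parametrized by `O(n) × ℝᵐ`, `m = n − j`, `|τ| = ‖u‖`) belongs to
`L^p` but `∫_{|τ|>a} |f(τ)| |τ|^{k+j−n} dτ = ∞` for every `a > 0`. -/
theorem lp_counterexample (j k m : ℕ) (hj : 1 ≤ j) (hk : 1 ≤ k) (hkm : k < m)
    [MeasurableSpace (Matrix.orthogonalGroup (Fin (j + m)) ℝ)]
    (μ : Measure (Matrix.orthogonalGroup (Fin (j + m)) ℝ)) [μ.IsHaarMeasure]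
    [IsProbabilityMeasure μ]
    (p : ℝ) (hp : (m : ℝ) / k ≤ p) :
    MemLp (fun τ : Matrix.orthogonalGroup (Fin (j + m)) ℝ × EuclideanSpace ℝ (Fin m) =>
        (2 + ‖τ.2‖) ^ (((j : ℝ) - ((j + m : ℕ) : ℝ)) / p) * (Real.log (2 + ‖τ.2‖))⁻¹)
      (ENNReal.ofReal p) (μ.prod volume) ∧
    ∀ a > (0:ℝ),
      ∫⁻ τ in {τ : Matrix.orthogonalGroup (Fin (j + m)) ℝ ×
          EuclideanSpace ℝ (Fin m) | a < ‖τ.2‖},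
        ENNReal.ofReal
          ((2 + ‖τ.2‖) ^ (((j : ℝ) - ((j + m : ℕ) : ℝ)) / p) *
            (Real.log (2 + ‖τ.2‖))⁻¹ * ‖τ.2‖ ^ ((k : ℝ) - m)) ∂(μ.prod volume) = ⊤ :=
  lp_counterexample_general j k m hk hkm μ p hp
end
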